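/- The family L₁ belongs to the class 1ReachU; that is, there exists a polynomial-size family of 1nfa's over {0,1,#} that is accept-few, reach-unambiguous, and solves L₁. -/

import Mathlib

/-! ## One-way nondeterministic finite automata -/

structure OneNFA (α : Type) : Type 1 where
  Q : Type
  [finQ : Fintype Q]
  start : Q
  next : Q → α → Set Q
  next_nonempty : ∀ q a, (next q a).Nonempty
  acc : Set Q

attribute [instance] OneNFA.finQ

namespace OneNFA

variable {α : Type}

/-- The state complexity (number of inner states). -/
def sc (M : OneNFA α) : ℕ := Fintype.card M.Q

/-- `p` is a computation path of `M` on input `x`. -/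
def IsPath (M : OneNFA α) (x : List α) (p : Fin (x.length + 1) → M.Q) : Prop :=
  p 0 = M.start ∧ ∀ i : Fin x.length, p i.succ ∈ M.next (p i.castSucc) (x.get i)

/-- `p` is an accepting computation path of `M` on input `x`. -/
def IsAccPath (M : OneNFA α) (x : List α) (p : Fin (x.length + 1) → M.Q) : Prop :=
  M.IsPath x p ∧ p (Fin.last x.length) ∈ M.acc

def Accepts (M : OneNFA α) (x : List α) : Prop := ∃ p, M.IsAccPath x p

/-- `M` is a 1dfa: every transition set is a singleton. -/
def Deterministic (M : OneNFA α) : Prop := ∀ q a, ∃ q', M.next q a = {q'}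

end OneNFA

/-! ## Families of promise problems -/

structure PromiseFamily (α : Type) where
  pos : ℕ → Set (List α)
  neg : ℕ → Set (List α)
  disj : ∀ n, Disjoint (pos n) (neg n)

namespace PromiseFamily

def valid {α : Type} (L : PromiseFamily α) (n : ℕ) : Set (List α) := L.pos n ∪ L.neg n

def co {α : Type} (L : PromiseFamily α) : PromiseFamily α :=
  ⟨L.neg, L.pos, fun n => (L.disj n).symm⟩

end PromiseFamily

/-- A family of promise problems over some finite alphabet. -/
structure Family : Type 1 where
  alph : Type
  [finA : Fintype alph]
  prob : PromiseFamily alph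

attribute [instance] Family.finA

def Family.co (F : Family) : Family := { alph := F.alph, prob := F.prob.co }

/-! ## One-way machine families -/

def Solves1 {α : Type} (M : ℕ → OneNFA α) (L : PromiseFamily α) : Prop :=
  ∀ n, (∀ x ∈ L.pos n, (M n).Accepts x) ∧ (∀ x ∈ L.neg n, ¬ (M n).Accepts x)

def PolySize1 {α : Type} (M : ℕ → OneNFA α) : Prop :=
  ∃ p : Polynomial ℕ, ∀ n, (M n).sc ≤ p.eval n

def Unambiguous1 {α : Type} (M : ℕ → OneNFA α) (L : PromiseFamily α) : Prop :=
  ∀ n, ∀ x ∈ L.valid n, {p | (M n).IsAccPath x p}.Subsingleton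

def AcceptFew1 {α : Type} (M : ℕ → OneNFA α) (L : PromiseFamily α) : Prop :=
  ∃ P : MvPolynomial (Fin 2) ℕ, ∀ n, ∀ x ∈ L.valid n,
    {p | (M n).IsAccPath x p}.ncard ≤ MvPolynomial.eval ![n, x.length] P

def WeaklyUnambiguous1 {α : Type} (M : ℕ → OneNFA α) (L : PromiseFamily α) : Prop :=
  ∀ n, ∀ x ∈ L.valid n, ∀ q : (M n).Q,
    {p | (M n).IsAccPath x p ∧ p (Fin.last x.length) = q}.Subsingleton

def ReachUnambiguous1 {α : Type} (M : ℕ → OneNFA α) (L : PromiseFamily α) : Prop :=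
  ∀ n, ∀ x ∈ L.valid n, ∀ i ≤ x.length, ∀ q : (M n).Q,
    {p : Fin ((x.take i).length + 1) → (M n).Q |
      (M n).IsPath (x.take i) p ∧ p (Fin.last (x.take i).length) = q}.Subsingleton

def ReachFew1 {α : Type} (M : ℕ → OneNFA α) (L : PromiseFamily α) : Prop :=
  ∃ P : MvPolynomial (Fin 2) ℕ, ∀ n, ∀ x ∈ L.valid n, ∀ i ≤ x.length, ∀ q : (M n).Q,
    {p : Fin ((x.take i).length + 1) → (M n).Q |
      (M n).IsPath (x.take i) p ∧ p (Fin.last (x.take i).length) = q}.ncard ≤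
      MvPolynomial.eval ![n, x.length] P

/-! ## One-way nonuniform state complexity classes -/

def oneN : Set Family :=
  {F | ∃ M : ℕ → OneNFA F.alph, PolySize1 M ∧ Solves1 M F.prob}

def oneD : Set Family :=
  {F | ∃ M : ℕ → OneNFA F.alph, PolySize1 M ∧ (∀ n, (M n).Deterministic) ∧ Solves1 M F.prob}

def oneU : Set Family :=
  {F | ∃ M : ℕ → OneNFA F.alph, PolySize1 M ∧ Unambiguous1 M F.prob ∧ Solves1 M F.prob}

def oneFew : Set Family :=
  {F | ∃ M : ℕ → OneNFA F.alph, PolySize1 M ∧ AcceptFew1 M F.prob ∧ Solves1 M F.prob}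

def oneFewU : Set Family :=
  {F | ∃ M : ℕ → OneNFA F.alph, PolySize1 M ∧ AcceptFew1 M F.prob ∧
        WeaklyUnambiguous1 M F.prob ∧ Solves1 M F.prob}

def oneReachU : Set Family :=
  {F | ∃ M : ℕ → OneNFA F.alph, PolySize1 M ∧ AcceptFew1 M F.prob ∧
        ReachUnambiguous1 M F.prob ∧ Solves1 M F.prob}

def oneReachFew : Set Family :=
  {F | ∃ M : ℕ → OneNFA F.alph, PolySize1 M ∧ AcceptFew1 M F.prob ∧
        ReachFew1 M F.prob ∧ Solves1 M F.prob}

def oneReachFewU : Set Family :=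
  {F | ∃ M : ℕ → OneNFA F.alph, PolySize1 M ∧ AcceptFew1 M F.prob ∧
        ReachFew1 M F.prob ∧ WeaklyUnambiguous1 M F.prob ∧ Solves1 M F.prob}

/-- The complement class `co-C`. -/
def coC (C : Set Family) : Set Family := {F | F.co ∈ C}
/-! ## Two-way nondeterministic finite automata -/

/-- A tape symbol: either an input symbol, the left endmarker `Sum.inr false`,
or the right endmarker `Sum.inr true`. -/
def TapeSym (α : Type) : Type := α ⊕ Bool

/-- The symbol held in cell `i` of the tape containing `▷x◁`. -/
def tapeAt {α : Type} (x : List α) (i : ℕ) : TapeSym α :=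
  if h0 : i = 0 then Sum.inr false
  else if h : i ≤ x.length then Sum.inl (x.get ⟨i - 1, by omega⟩)
  else Sum.inr true

structure TwoNFA (α : Type) : Type 1 where
  Q : Type
  [finQ : Fintype Q]
  start : Q
  acc : Set Q
  rej : Set Q
  acc_rej_disj : Disjoint acc rej
  next : Q → TapeSym α → Set (Q × ℤ)
  next_dir : ∀ q a t, t ∈ next q a → t.2 = -1 ∨ t.2 = 0 ∨ t.2 = 1

attribute [instance] TwoNFA.finQ

namespace TwoNFA

variable {α : Type}

def sc (M : TwoNFA α) : ℕ := Fintype.card M.Q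

def Halting (M : TwoNFA α) (q : M.Q) : Prop := q ∈ M.acc ∨ q ∈ M.rej

/-- Configuration `c` yields configuration `c'` in one step on input `x`. -/
def Yields (M : TwoNFA α) (x : List α) (c c' : M.Q × ℕ) : Prop :=
  ¬ M.Halting c.1 ∧ c.2 ≤ x.length + 1 ∧ c'.2 ≤ x.length + 1 ∧
    ∃ d : ℤ, (c'.1, d) ∈ M.next c.1 (tapeAt x c.2) ∧ (c'.2 : ℤ) = (c.2 : ℤ) + d

/-- A partial computation path of length `k` of `M` on `x`. -/
def IsPartialPath (M : TwoNFA α) (x : List α) (k : ℕ) (p : Fin (k + 1) → M.Q × ℕ) : Prop :=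
  p 0 = (M.start, 0) ∧ ∀ i : Fin k, M.Yields x (p i.castSucc) (p i.succ)

/-- A (full) computation path: the final configuration is the only halting one. -/
def IsCompPath (M : TwoNFA α) (x : List α) (k : ℕ) (p : Fin (k + 1) → M.Q × ℕ) : Prop :=
  M.IsPartialPath x k p ∧ ∀ i : Fin (k + 1), (M.Halting (p i).1 ↔ i = Fin.last k)

def IsAccPath (M : TwoNFA α) (x : List α) (k : ℕ) (p : Fin (k + 1) → M.Q × ℕ) : Prop :=
  M.IsCompPath x k p ∧ (p (Fin.last k)).1 ∈ M.acc

def Accepts (M : TwoNFA α) (x : List α) : Prop := ∃ k p, M.IsAccPath x k p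

def Deterministic (M : TwoNFA α) : Prop := ∀ q a, ∃ t, M.next q a = {t}

/-- The set of accepting computation paths of `M` on `x`. -/
def accPaths (M : TwoNFA α) (x : List α) : Set ((k : ℕ) × (Fin (k + 1) → M.Q × ℕ)) :=
  {kp | M.IsAccPath x kp.1 kp.2}

/-- The set of computation paths of `M` on `x` ending at configuration `conf`. -/
def compPathsTo (M : TwoNFA α) (x : List α) (conf : M.Q × ℕ) :
    Set ((k : ℕ) × (Fin (k + 1) → M.Q × ℕ)) :=
  {kp | M.IsCompPath x kp.1 kp.2 ∧ kp.2 (Fin.last kp.1) = conf}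

/-- The set of partial computation paths of `M` on `x` ending at configuration `conf`. -/
def partialPathsTo (M : TwoNFA α) (x : List α) (conf : M.Q × ℕ) :
    Set ((k : ℕ) × (Fin (k + 1) → M.Q × ℕ)) :=
  {kp | M.IsPartialPath x kp.1 kp.2 ∧ kp.2 (Fin.last kp.1) = conf}

end TwoNFA

/-! ## Two-way machine families -/

def Solves2 {α : Type} (M : ℕ → TwoNFA α) (L : PromiseFamily α) : Prop :=
  ∀ n, (∀ x ∈ L.pos n, (M n).Accepts x) ∧ (∀ x ∈ L.neg n, ¬ (M n).Accepts x)

def PolySize2 {α : Type} (M : ℕ → TwoNFA α) : Prop :=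
  ∃ p : Polynomial ℕ, ∀ n, (M n).sc ≤ p.eval n

def Unambiguous2 {α : Type} (M : ℕ → TwoNFA α) (L : PromiseFamily α) : Prop :=
  ∀ n, ∀ x ∈ L.valid n, ((M n).accPaths x).Subsingleton

def AcceptFew2 {α : Type} (M : ℕ → TwoNFA α) (L : PromiseFamily α) : Prop :=
  ∃ P : MvPolynomial (Fin 2) ℕ, ∀ n, ∀ x ∈ L.valid n,
    ((M n).accPaths x).encard ≤ (MvPolynomial.eval ![n, x.length] P : ℕ∞)

def WeaklyUnambiguous2 {α : Type} (M : ℕ → TwoNFA α) (L : PromiseFamily α) : Prop :=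
  ∀ n, ∀ x ∈ L.valid n, ∀ conf : (M n).Q × ℕ, conf.1 ∈ (M n).acc →
    ((M n).compPathsTo x conf).Subsingleton

def ReachUnambiguous2 {α : Type} (M : ℕ → TwoNFA α) (L : PromiseFamily α) : Prop :=
  ∀ n, ∀ x ∈ L.valid n, ∀ conf : (M n).Q × ℕ,
    ((M n).partialPathsTo x conf).Subsingleton

def ReachFew2 {α : Type} (M : ℕ → TwoNFA α) (L : PromiseFamily α) : Prop :=
  ∃ P : MvPolynomial (Fin 2) ℕ, ∀ n, ∀ x ∈ L.valid n, ∀ conf : (M n).Q × ℕ,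
    ((M n).partialPathsTo x conf).encard ≤ (MvPolynomial.eval ![n, x.length] P : ℕ∞)

/-! ## Two-way nonuniform state complexity classes -/

def twoN : Set Family :=
  {F | ∃ M : ℕ → TwoNFA F.alph, PolySize2 M ∧ Solves2 M F.prob}

def twoD : Set Family :=
  {F | ∃ M : ℕ → TwoNFA F.alph, PolySize2 M ∧ (∀ n, (M n).Deterministic) ∧ Solves2 M F.prob}

def twoU : Set Family :=
  {F | ∃ M : ℕ → TwoNFA F.alph, PolySize2 M ∧ Unambiguous2 M F.prob ∧ Solves2 M F.prob}

def twoFew : Set Family :=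
  {F | ∃ M : ℕ → TwoNFA F.alph, PolySize2 M ∧ AcceptFew2 M F.prob ∧ Solves2 M F.prob}

def twoFewU : Set Family :=
  {F | ∃ M : ℕ → TwoNFA F.alph, PolySize2 M ∧ AcceptFew2 M F.prob ∧
        WeaklyUnambiguous2 M F.prob ∧ Solves2 M F.prob}

def twoReachU : Set Family :=
  {F | ∃ M : ℕ → TwoNFA F.alph, PolySize2 M ∧ AcceptFew2 M F.prob ∧
        ReachUnambiguous2 M F.prob ∧ Solves2 M F.prob}

def twoReachFew : Set Family :=
  {F | ∃ M : ℕ → TwoNFA F.alph, PolySize2 M ∧ AcceptFew2 M F.prob ∧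
        ReachFew2 M F.prob ∧ Solves2 M F.prob}

def twoReachFewU : Set Family :=
  {F | ∃ M : ℕ → TwoNFA F.alph, PolySize2 M ∧ AcceptFew2 M F.prob ∧
        ReachFew2 M F.prob ∧ WeaklyUnambiguous2 M F.prob ∧ Solves2 M F.prob}

/-! ## Ceilings -/

/-- The family `F` has an `f(n)`-ceiling. -/
def HasCeiling (F : Family) (f : ℕ → ℕ) : Prop :=
  ∀ n, ∀ x ∈ F.prob.valid n, x.length ≤ f n

/-- The restriction `C/F` of a class `C` to families having an `f`-ceiling for some `f ∈ S`. -/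
def ceil (C : Set Family) (S : Set (ℕ → ℕ)) : Set Family :=
  {F | F ∈ C ∧ ∃ f ∈ S, HasCeiling F f}

def polyFuns : Set (ℕ → ℕ) := {f | ∃ p : Polynomial ℕ, ∀ n, f n = p.eval n}

/-- Super-exponential functions: `f(n) > 2^{p(n)}` for all but finitely many `n`,
for every polynomial `p`. -/
def supexpFuns : Set (ℕ → ℕ) :=
  {f | ∀ p : Polynomial ℕ, ∃ N, ∀ n ≥ N, 2 ^ p.eval n < f n}

/-- `F` has a logarithmic ceiling `ℓ(n) = a·log₂ n + b` with constants `a, b ≥ 0`. -/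
def HasLogCeiling (F : Family) : Prop :=
  ∃ a b : ℝ, 0 ≤ a ∧ 0 ≤ b ∧
    ∀ n, ∀ x ∈ F.prob.valid n, (x.length : ℝ) ≤ a * Real.logb 2 n + b

/-- The restriction `C/log` of a class `C` to families having logarithmic ceilings. -/
def ceilLog (C : Set Family) : Set Family := {F | F ∈ C ∧ HasLogCeiling F}
/-! ## The alphabet `{0, 1, #}` and encodings -/

inductive Sym3 : Type
  | zero | one | hash
deriving DecidableEq

instance : Fintype Sym3 :=
  ⟨{Sym3.zero, Sym3.one, Sym3.hash}, by intro x; cases x <;> simp⟩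

/-- The block `1^i 0^{m-i}`. -/
def block (m i : ℕ) : List Sym3 :=
  List.replicate i Sym3.one ++ List.replicate (m - i) Sym3.zero

lemma block_length {m i : ℕ} (h : i ≤ m) : (block m i).length = m := by
  simp [block]; omega

lemma block_count {m : ℕ} (i : ℕ) : (block m i).count Sym3.one = i := by
  simp [block, List.count_append, List.count_replicate]

lemma block_inj {m i j : ℕ} (h : block m i = block m j) : i = j := by
  have := block_count (m := m) i
  rw [h, block_count] at this
  omega

/-- The encoding `[[i₁,…,i_k]]_m` of a list of numbers. -/
def enc (m : ℕ) : List ℕ → List Sym3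
  | [] => []
  | [i] => block m i
  | i :: j :: rest => block m i ++ Sym3.zero :: enc m (j :: rest)

/-- Lists of length `k` with entries in `[n]`. -/
def ValidList (n k : ℕ) (l : List ℕ) : Prop :=
  l.length = k ∧ ∀ i ∈ l, 1 ≤ i ∧ i ≤ n

lemma enc_length {m : ℕ} :
    ∀ l : List ℕ, (∀ i ∈ l, i ≤ m) → (enc m l).length = l.length * (m + 1) - 1
  | [] => by simp [enc]
  | [i] => by
      intro h
      simp [enc, block_length (h i (by simp))]
  | i :: j :: rest => by
      intro h
      have ih := enc_length (j :: rest) (fun a ha => h a (List.mem_cons_of_mem _ ha))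
      have hb : (block m i).length = m := block_length (h i (List.mem_cons_self))
      show (block m i ++ Sym3.zero :: enc m (j :: rest)).length = _
      rw [List.length_append, hb, List.length_cons, ih]
      have hc : (i :: j :: rest).length = (j :: rest).length + 1 := by simp
      rw [hc]
      set L := (j :: rest).length with hLdef
      have hL : 1 ≤ L := by simp [hLdef]
      have h1 : (L + 1) * (m + 1) = L * (m + 1) + (m + 1) := by ring
      rw [h1]
      set P := L * (m + 1) with hPdef
      have hP : 1 ≤ P := by
        have := Nat.mul_le_mul hL (Nat.le_add_left 1 m)
        simpa [hPdef] using this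
      omega

lemma enc_ne_nil {m : ℕ} (i : ℕ) (rest : List ℕ) (hi : 1 ≤ i) :
    enc m (i :: rest) ≠ [] := by
  cases rest with
  | nil =>
      simp only [enc, block]
      intro h
      have := congrArg List.length h
      simp at this
      omega
  | cons j rest' =>
      simp only [enc]
      intro h
      have := congrArg List.length h
      simp at this

lemma enc_inj {m : ℕ} :
    ∀ u w : List ℕ, (∀ i ∈ u, 1 ≤ i ∧ i ≤ m) → (∀ i ∈ w, 1 ≤ i ∧ i ≤ m) →
      enc m u = enc m w → u = w
  | [], [], _, _, _ => rfl
  | [], j :: w', _, hw, h => by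
      exact absurd h.symm (enc_ne_nil j w' (hw j (by simp)).1)
  | i :: u', [], hu, _, h => by
      exact absurd h (enc_ne_nil i u' (hu i (by simp)).1)
  | [i], [j], hu, hw, h => by
      simp only [enc] at h
      rw [block_inj h]
  | [i], j :: b :: w', hu, hw, h => by
      exfalso
      have hl := congrArg List.length h
      rw [show enc m [i] = block m i from rfl,
        show enc m (j :: b :: w') = block m j ++ Sym3.zero :: enc m (b :: w') from rfl] at hl
      rw [List.length_append, List.length_cons,
        block_length (hu i (by simp)).2, block_length (hw j (by simp)).2] at hl
      omega
  | i :: a :: u', [j], hu, hw, h => by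
      exfalso
      have hl := congrArg List.length h
      rw [show enc m [j] = block m j from rfl,
        show enc m (i :: a :: u') = block m i ++ Sym3.zero :: enc m (a :: u') from rfl] at hl
      rw [List.length_append, List.length_cons,
        block_length (hu i (by simp)).2, block_length (hw j (by simp)).2] at hl
      omega
  | i :: a :: u', j :: b :: w', hu, hw, h => by
      rw [show enc m (i :: a :: u') = block m i ++ Sym3.zero :: enc m (a :: u') from rfl,
        show enc m (j :: b :: w') = block m j ++ Sym3.zero :: enc m (b :: w') from rfl] at h
      have hlen : (block m i).length = (block m j).length := by
        rw [block_length (hu i (by simp)).2, block_length (hw j (by simp)).2]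
      obtain ⟨h1, h2⟩ := List.append_inj h hlen
      have h3 : enc m (a :: u') = enc m (b :: w') := by
        simpa using h2
      have ih := enc_inj (a :: u') (b :: w')
        (fun x hx => hu x (List.mem_cons_of_mem _ hx))
        (fun x hx => hw x (List.mem_cons_of_mem _ hx)) h3
      rw [block_inj h1, ih]
/-! ## The promise problem family `L₁` -/

def L1pos (n : ℕ) : Set (List Sym3) :=
  {x | ∃ u v : List ℕ, ValidList n n u ∧ ValidList n n v ∧ u ≠ v ∧
        x = enc n u ++ Sym3.hash :: enc n v}

def L1neg (n : ℕ) : Set (List Sym3) :=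
  {x | ∃ u v : List ℕ, ValidList n n u ∧ ValidList n n v ∧ u = v ∧
        x = enc n u ++ Sym3.hash :: enc n v}

lemma L1_disj (n : ℕ) : Disjoint (L1pos n) (L1neg n) := by
  rw [Set.disjoint_left]
  rintro x ⟨u, v, hu, hv, huv, rfl⟩ ⟨u', v', hu', hv', huv', heq⟩
  have hlen : (enc n u).length = (enc n u').length := by
    rw [enc_length u (fun i hi => (hu.2 i hi).2),
      enc_length u' (fun i hi => (hu'.2 i hi).2), hu.1, hu'.1]
  obtain ⟨h1, h2⟩ := List.append_inj heq hlen
  have h2' : enc n v = enc n v' := by simpa using h2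
  have e1 : u = u' := enc_inj u u' hu.2 hu'.2 h1
  have e2 : v = v' := enc_inj v v' hv.2 hv'.2 h2'
  exact huv (by rw [e1, e2, huv'])

def L1prob : PromiseFamily Sym3 := ⟨L1pos, L1neg, L1_disj⟩

def L1fam : Family := { alph := Sym3, prob := L1prob }

/-! ## Matrices, their encodings, and the promise problem family `L₂` -/

/-- `R` represents an `n × n` matrix with entries in `[n]`, given as its list of rows. -/
def ValidMat (n : ℕ) (R : List (List ℕ)) : Prop :=
  R.length = n ∧ ∀ r ∈ R, ValidList n n r

/-- The encoding `[[D]]_n` of a matrix: its encoded rows joined by `#`. -/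
def encMat (n : ℕ) : List (List ℕ) → List Sym3
  | [] => []
  | [r] => enc n r
  | r :: s :: rest => enc n r ++ Sym3.hash :: encMat n (s :: rest)

lemma encMat_len {n : ℕ} :
    ∀ R : List (List ℕ), (∀ r ∈ R, ValidList n n r) →
      (encMat n R).length = R.length * (n * (n + 1) - 1 + 1) - 1
  | [] => by simp [encMat]
  | [r] => by
      intro h
      have hr := h r (by simp)
      have he : (enc n r).length = n * (n + 1) - 1 := by
        rw [enc_length r (fun i hi => (hr.2 i hi).2), hr.1]
      show (enc n r).length = ([r] : List (List ℕ)).length * (n * (n + 1) - 1 + 1) - 1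
      rw [he, show ([r] : List (List ℕ)).length = 1 from rfl]
      omega
  | r :: s :: rest => by
      intro h
      have ih := encMat_len (s :: rest) (fun a ha => h a (List.mem_cons_of_mem _ ha))
      have hr := h r (by simp)
      have he : (enc n r).length = n * (n + 1) - 1 := by
        rw [enc_length r (fun i hi => (hr.2 i hi).2), hr.1]
      show (enc n r ++ Sym3.hash :: encMat n (s :: rest)).length = _
      rw [List.length_append, he, List.length_cons, ih]
      have hc : (r :: s :: rest).length = (s :: rest).length + 1 := by simp
      rw [hc]
      set e := n * (n + 1) - 1 with hedef
      set L := (s :: rest).length with hLdef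
      have hL : 1 ≤ L := by simp [hLdef]
      have h1 : (L + 1) * (e + 1) = L * (e + 1) + (e + 1) := by ring
      rw [h1]
      set P := L * (e + 1) with hPdef
      have hP : 1 ≤ P := by
        calc 1 = 1 * 1 := by ring
        _ ≤ L * (e + 1) := Nat.mul_le_mul hL (by omega)
      omega

lemma encMat_inj {n : ℕ} :
    ∀ R W : List (List ℕ), (∀ r ∈ R, ValidList n n r) → (∀ r ∈ W, ValidList n n r) →
      R.length = W.length → encMat n R = encMat n W → R = W
  | [], [], _, _, _, _ => rfl
  | [], _ :: _, _, _, hl, _ => by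
      simp only [List.length_cons, List.length_nil] at hl
      omega
  | _ :: _, [], _, _, hl, _ => by
      simp only [List.length_cons, List.length_nil] at hl
      omega
  | [r], [w], hR, hW, _, h => by
      have := enc_inj r w (hR r (by simp)).2 (hW w (by simp)).2 h
      rw [this]
  | [r], w :: w' :: W', _, _, hl, _ => by
      simp only [List.length_cons, List.length_nil] at hl
      omega
  | r :: r' :: R', [w], _, _, hl, _ => by
      simp only [List.length_cons, List.length_nil] at hl
      omega
  | r :: r' :: R', w :: w' :: W', hR, hW, hl, h => by
      rw [show encMat n (r :: r' :: R') = enc n r ++ Sym3.hash :: encMat n (r' :: R') from rfl,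
        show encMat n (w :: w' :: W') = enc n w ++ Sym3.hash :: encMat n (w' :: W') from rfl] at h
      have hrlen : (enc n r).length = (enc n w).length := by
        have h1 := hR r (by simp); have h2 := hW w (by simp)
        rw [enc_length r (fun i hi => (h1.2 i hi).2),
          enc_length w (fun i hi => (h2.2 i hi).2), h1.1, h2.1]
      obtain ⟨h1, h2⟩ := List.append_inj h hrlen
      have h3 : encMat n (r' :: R') = encMat n (w' :: W') := by simpa using h2
      have ihr := enc_inj r w (hR r (by simp)).2 (hW w (by simp)).2 h1
      have ih := encMat_inj (r' :: R') (w' :: W')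
        (fun a ha => hR a (List.mem_cons_of_mem _ ha))
        (fun a ha => hW a (List.mem_cons_of_mem _ ha))
        (by simpa using hl) h3
      rw [ihr, ih]

/-- `SelSum R s` holds iff `s` is obtained by choosing one entry from each row of `R`
(the value `sum_D(σ)` for some choice function `σ`). -/
inductive SelSum : List (List ℕ) → ℕ → Prop
  | nil : SelSum [] 0
  | cons {a : ℕ} {r : List ℕ} {rest : List (List ℕ)} {s : ℕ} :
      a ∈ r → SelSum rest s → SelSum (r :: rest) (a + s)

def L2pos (n : ℕ) : Set (List Sym3) :=
  {x | ∃ R R' : List (List ℕ), ValidMat n R ∧ ValidMat n R' ∧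
        (∃ s : ℕ, SelSum R s ∧ SelSum R' s) ∧
        x = encMat n R ++ Sym3.hash :: Sym3.hash :: encMat n R'}

def L2neg (n : ℕ) : Set (List Sym3) :=
  {x | ∃ R R' : List (List ℕ), ValidMat n R ∧ ValidMat n R' ∧
        (∀ s s' : ℕ, SelSum R s → SelSum R' s' → s ≠ s') ∧
        x = encMat n R ++ Sym3.hash :: Sym3.hash :: encMat n R'}

lemma L2_disj (n : ℕ) : Disjoint (L2pos n) (L2neg n) := by
  rw [Set.disjoint_left]
  rintro x ⟨R, R', hR, hR', ⟨s, hs, hs'⟩, rfl⟩ ⟨W, W', hW, hW', hne, heq⟩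
  have hlen : (encMat n R).length = (encMat n W).length := by
    rw [encMat_len R hR.2, encMat_len W hW.2, hR.1, hW.1]
  obtain ⟨h1, h2⟩ := List.append_inj heq hlen
  have h2' : encMat n R' = encMat n W' := by simpa using h2
  have e1 : R = W := encMat_inj R W hR.2 hW.2 (by rw [hR.1, hW.1]) h1
  have e2 : R' = W' := encMat_inj R' W' hR'.2 hW'.2 (by rw [hR'.1, hW'.1]) h2'
  exact hne s s (e1 ▸ hs) (e2 ▸ hs') rfl

def L2prob : PromiseFamily Sym3 := ⟨L2pos, L2neg, L2_disj⟩

def L2fam : Family := { alph := Sym3, prob := L2prob }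
/-! ## One-way probabilistic finite automata data -/

/-- Product of the matrices of the symbols of a word. -/
noncomputable def wordMatrix {α Q : Type} [Fintype Q] [DecidableEq Q]
    (Mσ : TapeSym α → Matrix Q Q ℝ) (w : List (TapeSym α)) : Matrix Q Q ℝ :=
  (w.map Mσ).prod

/-- The tape word `▷ x ◁`. -/
def tapeWord {α : Type} (x : List α) : List (TapeSym α) :=
  Sum.inr false :: (x.map Sum.inl ++ [Sum.inr true])

/-- `p_{acc}(x : q)`: the `q`-entry of the row vector `ν · M_{▷x◁}`. -/
noncomputable def pacc {α Q : Type} [Fintype Q] [DecidableEq Q]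
    (ν : Q → ℝ) (Mσ : TapeSym α → Matrix Q Q ℝ) (x : List α) (q : Q) : ℝ :=
  Matrix.vecMul ν (wordMatrix Mσ (tapeWord x)) q

/-! On its first symbol the machine for `n` guesses an index `e < n`; from then on it runs a
deterministic counter comparing the number of `1`s in the `e`-th block of `u` with that in the
`e`-th block of `v`. Every later state records the guess, so a state determines the unique path
reaching it, there are at most `n` accepting paths, and there are `O(n⁵)` states. -/

lemma DFA.eval_take_succ {α σ : Type*} (M : DFA α σ) (x : List α) (i : Fin x.length) :
    M.eval (x.take (i + 1)) = M.step (M.eval (x.take i)) (x.get i) := by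
  rw [← List.take_append_getElem i.isLt, DFA.eval_append_singleton, List.get_eq_getElem]

namespace OneNFA

variable {α E σ : Type} [Fintype E] [Fintype σ]

/-- For empty `E` the start state loops, only to keep the transition sets nonempty. -/
abbrev guess (A : E → DFA α σ) : OneNFA α where
  Q := Option (E × σ)
  start := none
  next
    | none, a => {_q | IsEmpty E} ∪ Set.range fun e => some (e, (A e).step (A e).start a)
    | some (e, s), a => {some (e, (A e).step s a)}
  next_nonempty
    | none, _ => by
      cases isEmpty_or_nonempty E with
      | inl h => exact ⟨none, Or.inl h⟩
      | inr h => exact ⟨_, Or.inr ⟨Classical.arbitrary E, rfl⟩⟩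
    | some _, _ => Set.singleton_nonempty _
  acc := {q | ∃ e s, q = some (e, s) ∧ s ∈ (A e).accept}

variable (A : E → DFA α σ)

lemma sc_guess : (guess A).sc = Fintype.card E * Fintype.card σ + 1 :=
  Fintype.card_option.trans (congrArg (· + 1) (Fintype.card_prod E σ))

lemma next_guess_none (a : α) : (guess A).next none a =
    {_q | IsEmpty E} ∪ Set.range fun e => some (e, (A e).step (A e).start a) := rfl

lemma next_guess_some (e : E) (s : σ) (a : α) :
    (guess A).next (some (e, s)) a = {some (e, (A e).step s a)} := rfl

def guessPath (e : E) (x : List α) : Fin (x.length + 1) → (guess A).Q :=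
  fun j => if (j : ℕ) = 0 then none else some (e, (A e).eval (x.take j))

lemma guessPath_last {e : E} {x : List α} (hx : x ≠ []) :
    guessPath A e x (Fin.last x.length) = some (e, (A e).eval x) := by
  simp [guessPath, hx]

lemma guessPath_succ (e : E) (x : List α) (i : Fin x.length) :
    guessPath A e x i.succ = some (e, (A e).step ((A e).eval (x.take i)) (x.get i)) := by
  simp [guessPath, DFA.eval_take_succ]

lemma isPath_guessPath (e : E) (x : List α) : (guess A).IsPath x (guessPath A e x) := by
  refine ⟨if_pos rfl, fun i => ?_⟩
  rw [guessPath_succ]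
  by_cases hi : (i : ℕ) = 0
  · rw [show guessPath A e x i.castSucc = none from if_pos hi, next_guess_none]
    exact Or.inr ⟨e, by simp [hi]⟩
  · rw [show guessPath A e x i.castSucc = some (e, (A e).eval (x.take i)) from if_neg hi,
      next_guess_some, Set.mem_singleton_iff]

lemma eq_guessPath_of_isPath [Nonempty E] {x : List α} {p : Fin (x.length + 1) → (guess A).Q}
    (hp : (guess A).IsPath x p) : ∃ e, p = guessPath A e x := by
  obtain ⟨e, he⟩ :
      ∃ e, ∀ i : Fin x.length, (i : ℕ) = 0 → p i.succ = guessPath A e x i.succ := by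
    rcases Nat.eq_zero_or_pos x.length with hx | hx
    · exact ⟨Classical.arbitrary E, fun i => absurd i.isLt (by omega)⟩
    have hstep := hp.2 ⟨0, hx⟩
    rw [show p (Fin.castSucc ⟨0, hx⟩) = none from hp.1, next_guess_none] at hstep
    rcases hstep with hE | ⟨e, he⟩
    · exact (not_isEmpty_of_nonempty E hE).elim
    refine ⟨e, fun i hi => ?_⟩
    obtain rfl : i = ⟨0, hx⟩ := Fin.ext hi
    rw [← he, guessPath_succ]
    simp
  refine ⟨e, funext fun j => Fin.induction (motive := fun j => p j = guessPath A e x j)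
    (hp.1.trans (if_pos rfl).symm) (fun i ih => ?_) j⟩
  by_cases hi : (i : ℕ) = 0
  · exact he i hi
  have hstep := hp.2 i
  rw [ih, show guessPath A e x i.castSucc = some (e, (A e).eval (x.take i)) from if_neg hi,
    next_guess_some] at hstep
  rw [hstep, guessPath_succ]

lemma guess_reachUnambiguous (x : List α) (q : (guess A).Q) :
    {p | (guess A).IsPath x p ∧ p (Fin.last x.length) = q}.Subsingleton := by
  rintro p ⟨hp, rfl⟩ p' ⟨hp', hq⟩
  cases isEmpty_or_nonempty E
  · exact Subsingleton.elim _ _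
  obtain ⟨e, rfl⟩ := eq_guessPath_of_isPath A hp
  obtain ⟨e', rfl⟩ := eq_guessPath_of_isPath A hp'
  rcases eq_or_ne x [] with rfl | hx
  · funext j
    simp [guessPath, Fin.fin_one_eq_zero j]
  · rw [guessPath_last A hx, guessPath_last A hx] at hq
    cases hq
    rfl

lemma accepts_guess_iff {x : List α} (hx : x ≠ []) :
    (guess A).Accepts x ↔ ∃ e, (A e).eval x ∈ (A e).accept := by
  constructor
  · rintro ⟨p, hp, e, s, hlast, hs⟩
    have : Nonempty E := ⟨e⟩
    obtain ⟨e', rfl⟩ := eq_guessPath_of_isPath A hp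
    rw [guessPath_last A hx] at hlast
    cases hlast
    exact ⟨_, hs⟩
  · rintro ⟨e, he⟩
    exact ⟨guessPath A e x, isPath_guessPath A e x, e, _, guessPath_last A hx, he⟩

lemma ncard_accPaths_guess_le (x : List α) :
    {p | (guess A).IsAccPath x p}.ncard ≤ Fintype.card E := by
  have hsub : {p | (guess A).IsAccPath x p} ⊆ Set.range (guessPath A · x) := by
    rintro p ⟨hp, e, -, -, -⟩
    have : Nonempty E := ⟨e⟩
    obtain ⟨e', rfl⟩ := eq_guessPath_of_isPath A hp
    exact ⟨e', rfl⟩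
  calc _ ≤ (Set.range (guessPath A · x)).ncard := Set.ncard_le_ncard hsub
    _ ≤ Nat.card E := by
      rw [← Set.image_univ, ← Set.ncard_univ E]
      exact Set.ncard_image_le
    _ = Fintype.card E := Nat.card_eq_fintype_card

end OneNFA

section WindowCount

variable {α : Type} [DecidableEq α]

def windowCount (mark : α) (s len : ℕ) (w : List α) : ℕ := ((w.drop s).take len).count mark

lemma windowCount_le (mark : α) (s len : ℕ) (w : List α) : windowCount mark s len w ≤ len :=
  List.count_le_length.trans (List.length_take_le _ _)

lemma windowCount_append_singleton (mark : α) (s len : ℕ) (w : List α) (a : α) :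
    windowCount mark s len (w ++ [a]) = windowCount mark s len w +
      if s ≤ w.length ∧ w.length < s + len ∧ a = mark then 1 else 0 := by
  unfold windowCount
  by_cases hs : s ≤ w.length
  · rw [List.drop_append_of_le_length hs, List.take_append, List.count_append]
    by_cases hl : w.length < s + len
    · rw [List.take_of_length_le (l := w.drop s) (by simp; omega),
        List.take_of_length_le (l := [a]) (by simp; omega)]
      simp [hs, hl, List.count_singleton]
    · rw [Nat.sub_eq_zero_of_le (by simp; omega)]
      simp [hl]
  · rw [List.drop_eq_nil_of_le (by simp; omega), List.drop_eq_nil_of_le (by omega)]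
    simp [hs]

variable (sep mark : α) (s len cap : ℕ)

/-- State `(stored, pos, cnt)`: the count stored at the last `sep`, the position in the current
`sep`-free segment (capped at `cap`), and the number of `mark`s seen so far in positions
`[s, s + len)` of that segment. -/
def windowDFA : DFA α (Fin (len + 1) × Fin (cap + 1) × Fin (len + 1)) where
  step q a :=
    if a = sep then (q.2.2, 0, 0)
    else (q.1, ⟨min (q.2.1 + 1) cap, by omega⟩,
      ⟨min (q.2.2 + if s ≤ q.2.1 ∧ q.2.1 < s + len ∧ a = mark then 1 else 0) len,
        by omega⟩)
  start := (0, 0, 0)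
  accept := {q | q.1 ≠ q.2.2}

variable {sep mark s len cap}

lemma windowDFA_step_sep (q : Fin (len + 1) × Fin (cap + 1) × Fin (len + 1)) :
    (windowDFA sep mark s len cap).step q sep = (q.2.2, 0, 0) := if_pos rfl

lemma windowDFA_step_of_ne {a : α} (ha : a ≠ sep)
    (q : Fin (len + 1) × Fin (cap + 1) × Fin (len + 1)) :
    (windowDFA sep mark s len cap).step q a = (q.1, ⟨min (q.2.1 + 1) cap, by omega⟩,
      ⟨min (q.2.2 + if s ≤ q.2.1 ∧ q.2.1 < s + len ∧ a = mark then 1 else 0) len,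
        by omega⟩) :=
  if_neg ha

lemma windowDFA_evalFrom (hcap : s + len ≤ cap) (k : Fin (len + 1)) {w : List α}
    (hw : sep ∉ w) :
    (windowDFA sep mark s len cap).evalFrom (k, 0, 0) w =
      (k, ⟨min w.length cap, by omega⟩,
        ⟨windowCount mark s len w, Nat.lt_succ_of_le (windowCount_le mark s len w)⟩) := by
  induction w using List.reverseRecOn with
  | nil => ext <;> simp [windowCount]
  | append_singleton w a ih =>
    have hbound := windowCount_le mark s len (w ++ [a])
    rw [DFA.evalFrom_append_singleton, ih (fun h => hw (by simp [h])),
      windowDFA_step_of_ne (fun h => hw (by simp [h]))]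
    rw [windowCount_append_singleton] at hbound
    have hpos : (s ≤ min w.length cap ∧ min w.length cap < s + len ∧ a = mark) ↔
        (s ≤ w.length ∧ w.length < s + len ∧ a = mark) := by
      constructor <;> rintro ⟨h1, h2, h3⟩ <;> exact ⟨by omega, by omega, h3⟩
    simp only [hpos, windowCount_append_singleton, List.length_append, List.length_singleton]
    refine Prod.ext rfl (Prod.ext (Fin.ext ?_) (Fin.ext ?_)) <;> dsimp only <;> omega

lemma windowDFA_eval_mem_accept (hcap : s + len ≤ cap) {u v : List α} (hu : sep ∉ u)
    (hv : sep ∉ v) :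
    (windowDFA sep mark s len cap).eval (u ++ sep :: v) ∈
        (windowDFA sep mark s len cap).accept ↔
      windowCount mark s len u ≠ windowCount mark s len v := by
  rw [DFA.eval, ← List.singleton_append, DFA.evalFrom_of_append, DFA.evalFrom_of_append,
    show (windowDFA sep mark s len cap).start = (0, 0, 0) from rfl, windowDFA_evalFrom hcap _ hu,
    DFA.evalFrom_singleton, windowDFA_step_sep, windowDFA_evalFrom hcap _ hv]
  simp [windowDFA, Fin.ext_iff]

end WindowCount

lemma hash_not_mem_block (m i : ℕ) : Sym3.hash ∉ block m i := by
  simp [block, List.mem_replicate]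

lemma hash_not_mem_enc (m : ℕ) : ∀ l : List ℕ, Sym3.hash ∉ enc m l
  | [] => List.not_mem_nil
  | [i] => hash_not_mem_block m i
  | i :: j :: rest => by
    simp only [enc, List.mem_append, List.mem_cons, reduceCtorEq, false_or, not_or]
    exact ⟨hash_not_mem_block m i, hash_not_mem_enc m (j :: rest)⟩

/-- Block `e` of `[[u]]_n` occupies positions `[e (n + 1), e (n + 1) + n)`. -/
lemma windowCount_enc {n : ℕ} :
    ∀ (u : List ℕ), (∀ i ∈ u, i ≤ n) → ∀ (e : ℕ) (he : e < u.length),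
      windowCount Sym3.one (e * (n + 1)) n (enc n u) = u[e]
  | [i], hu, 0, _ => by
    simp [windowCount, enc, List.take_of_length_le (block_length (hu i (by simp))).le,
      block_count]
  | i :: j :: rest, hu, 0, _ => by
    simp [windowCount, enc, List.take_left' (block_length (hu i (by simp))), block_count]
  | i :: j :: rest, hu, e + 1, he => by
    have hlen : (block n i ++ [Sym3.zero]).length = n + 1 := by
      simp [block_length (hu i (by simp))]
    have ih := windowCount_enc (j :: rest) (fun a ha => hu a (by simp_all)) e
      (by simp at he ⊢; omega)
    rw [List.getElem_cons_succ, ← ih]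
    simp only [windowCount, enc]
    rw [show block n i ++ Sym3.zero :: enc n (j :: rest)
        = (block n i ++ [Sym3.zero]) ++ enc n (j :: rest) by simp,
      show (e + 1) * (n + 1) = (block n i ++ [Sym3.zero]).length + e * (n + 1) by rw [hlen]; ring,
      ← List.drop_drop, List.drop_left]

def L1Machine (n : ℕ) : OneNFA Sym3 :=
  OneNFA.guess fun e : Fin n => windowDFA Sym3.hash Sym3.one (e * (n + 1)) n (n * (n + 1))

lemma sc_L1Machine (n : ℕ) :
    (L1Machine n).sc = n * ((n + 1) * ((n * (n + 1) + 1) * (n + 1))) + 1 := by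
  simp [L1Machine, OneNFA.sc_guess]

lemma block_end_le {n e : ℕ} (he : e < n) : e * (n + 1) + n ≤ n * (n + 1) := by
  nlinarith

lemma exists_getElem_ne_iff {β : Type*} {n : ℕ} {u v : List β} (hu : u.length = n)
    (hv : v.length = n) :
    (∃ e : Fin n, u[e] ≠ v[e]) ↔ u ≠ v := by
  refine ⟨fun ⟨e, he⟩ huv => he (by subst huv; rfl), fun huv => ?_⟩
  by_contra! h
  exact huv (List.ext_getElem (hu.trans hv.symm) fun i h₁ _ => h ⟨i, hu ▸ h₁⟩)

lemma L1Machine_accepts_iff {n : ℕ} {u v : List ℕ} (hu : ValidList n n u)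
    (hv : ValidList n n v) :
    (L1Machine n).Accepts (enc n u ++ Sym3.hash :: enc n v) ↔ u ≠ v := by
  rw [L1Machine, OneNFA.accepts_guess_iff _ (by simp), ← exists_getElem_ne_iff hu.1 hv.1]
  refine exists_congr fun e => ?_
  rw [windowDFA_eval_mem_accept (block_end_le e.isLt) (hash_not_mem_enc n u)
    (hash_not_mem_enc n v), windowCount_enc u (fun i hi => (hu.2 i hi).2) e (hu.1 ▸ e.isLt),
    windowCount_enc v (fun i hi => (hv.2 i hi).2) e (hv.1 ▸ e.isLt)]
  exact Iff.rfl

/-- The family `L₁` belongs to `1ReachU`. -/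
theorem L1_mem_oneReachU : L1fam ∈ oneReachU := by
  open Polynomial in
  refine ⟨L1Machine, ⟨X * ((X + 1) * ((X * (X + 1) + 1) * (X + 1))) + 1, fun n => ?_⟩,
    ⟨MvPolynomial.X 0, fun n x _ => ?_⟩, fun n x _ i _ q => ?_, fun n => ⟨?_, ?_⟩⟩
  · exact (sc_L1Machine n).trans_le (by simp)
  · exact (OneNFA.ncard_accPaths_guess_le _ x).trans (by simp)
  · exact OneNFA.guess_reachUnambiguous _ (x.take i) q
  · rintro _ ⟨u, v, hu, hv, huv, rfl⟩
    exact (L1Machine_accepts_iff hu hv).2 huv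
  · rintro _ ⟨u, v, hu, hv, huv, rfl⟩
    exact fun h => (L1Machine_accepts_iff hu hv).1 h huv
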